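/- Pythagorean identities for the α-divergence: Let α ∈ ℝ∖{0,1}, α* = 1−α, and L ∈ ℒ⁺. Then for every M̄ ∈ ℒ⁺(π): D_α(L||M̄) = D_α(L||P_α(L)) + D_α(P_α(L)||M̄), and D_α(M̄||L) = D_α(M̄||P_{α*}(L)) + D_α(P_{α*}(L)||L). -/

import Mathlib

open Finset

noncomputable section

variable {X : Type*} [Fintype X] [DecidableEq X]

/-- Build a matrix with prescribed off-diagonal entries and diagonal entries
chosen so that every row sums to zero. -/
def rowZero (F : X → X → ℝ) : X → X → ℝ :=
  fun x y => if x = y then -(∑ z ∈ Finset.univ.erase x, F x z) else F x y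

/-- `L` is a Markov infinitesimal generator: nonnegative off-diagonal entries
and zero row sums. -/
def IsGen (L : X → X → ℝ) : Prop :=
  (∀ x y, x ≠ y → 0 ≤ L x y) ∧ (∀ x, ∑ y, L x y = 0)

/-- `L` is a `π`-reversible Markov generator, i.e. `L ∈ ℒ(π)`. -/
def IsRev (π : X → ℝ) (L : X → X → ℝ) : Prop :=
  IsGen L ∧ ∀ x y, π x * L x y = π y * L y x

/-- `π` is a probability distribution with full support. -/
def IsProb (π : X → ℝ) : Prop := (∀ x, 0 < π x) ∧ ∑ x, π x = 1

/-- The `π`-dual `L_π` of `L`: off-diagonal entries `π(y)L(y,x)/π(x)`,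
diagonal entries make row sums zero. -/
def dual (π : X → ℝ) (L : X → X → ℝ) : X → X → ℝ :=
  rowZero (fun x y => π y * L y x / π x)

/-- The `f`-divergence between generators: `Df f π M L = D_f(M‖L)`.
(The convention `0·f(a/0) = 0` holds automatically since `a/0 = 0` and
the factor `L x y = 0` kills the term.) -/
def Df (f : ℝ → ℝ) (π : X → ℝ) (M L : X → X → ℝ) : ℝ :=
  ∑ x, π x * ∑ y ∈ Finset.univ.erase x, L x y * f (M x y / L x y)

/-- Generator of the `α`-divergence: `f_α(t) = (t^α − αt − (1−α))/(α(α−1))`. -/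
def falpha (α : ℝ) : ℝ → ℝ :=
  fun t => (t ^ α - α * t - (1 - α)) / (α * (α - 1))

/-- The power mean reversiblization `P_p(L)`: off-diagonal entries
`((L(x,y)^p + L_π(x,y)^p)/2)^{1/p}` (set to `0` when `p < 0` and
`L(x,y)·L_π(x,y) = 0`), diagonal entries make row sums zero. -/
def pmean (p : ℝ) (π : X → ℝ) (L : X → X → ℝ) : X → X → ℝ :=
  rowZero (fun x y =>
    if p < 0 ∧ L x y * dual π L x y = 0 then 0
    else ((L x y ^ p + dual π L x y ^ p) / 2) ^ (1 / p))

-- auxiliary sums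
def Ssum (π : X → ℝ) (A : X → X → ℝ) : ℝ :=
  ∑ x, π x * ∑ y ∈ Finset.univ.erase x, A x y

def Gsum (α : ℝ) (π : X → ℝ) (A B : X → X → ℝ) : ℝ :=
  ∑ x, π x * ∑ y ∈ Finset.univ.erase x, A x y ^ α * B x y ^ (1 - α)

lemma dual_apply (π : X → ℝ) (L : X → X → ℝ) {x y : X} (h : x ≠ y) :
    dual π L x y = π y * L y x / π x := by
  simp [dual, rowZero, h]

lemma pmean_apply (p : ℝ) (π : X → ℝ) (L : X → X → ℝ) {x y : X} (h : x ≠ y)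
    (hL : 0 < L x y) (hd : 0 < dual π L x y) :
    pmean p π L x y = ((L x y ^ p + dual π L x y ^ p) / 2) ^ (1 / p) := by
  have : ¬ (p < 0 ∧ L x y * dual π L x y = 0) := by
    rintro ⟨-, h0⟩
    exact absurd h0 (by positivity)
  simp only [pmean, rowZero, if_neg h, if_neg this]

lemma pmean_pos (p : ℝ) (π : X → ℝ) (L : X → X → ℝ) {x y : X} (h : x ≠ y)
    (hL : 0 < L x y) (hd : 0 < dual π L x y) :
    0 < pmean p π L x y := by
  rw [pmean_apply p π L h hL hd]
  have h1 : 0 < L x y ^ p := Real.rpow_pos_of_pos hL p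
  have h2 : 0 < dual π L x y ^ p := Real.rpow_pos_of_pos hd p
  positivity

lemma pmean_rpow (p : ℝ) (hp : p ≠ 0) (π : X → ℝ) (L : X → X → ℝ) {x y : X} (h : x ≠ y)
    (hL : 0 < L x y) (hd : 0 < dual π L x y) :
    pmean p π L x y ^ p = (L x y ^ p + dual π L x y ^ p) / 2 := by
  rw [pmean_apply p π L h hL hd]
  have h1 : 0 < L x y ^ p := Real.rpow_pos_of_pos hL p
  have h2 : 0 < dual π L x y ^ p := Real.rpow_pos_of_pos hd p
  have ha : (0:ℝ) ≤ (L x y ^ p + dual π L x y ^ p) / 2 := by positivity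
  rw [← Real.rpow_mul ha, one_div_mul_cancel hp, Real.rpow_one]


lemma dual_pos {π : X → ℝ} (hπ : ∀ x, 0 < π x) {L : X → X → ℝ}
    (hLpos : ∀ x y, x ≠ y → 0 < L x y) {x y : X} (h : x ≠ y) :
    0 < dual π L x y := by
  rw [dual_apply π L h]
  exact div_pos (mul_pos (hπ y) (hLpos y x h.symm)) (hπ x)

/-- general pointwise swap identity for products of rpow's -/
lemma pt {p q a b c d β : ℝ} (hp : 0 < p) (hq : 0 < q) (hb : 0 ≤ b)
    (hc : 0 ≤ c) (hd : 0 ≤ d) (h1 : p * a = q * c) (h2 : p * b = q * d) :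
    p * (a ^ β * b ^ (1 - β)) = q * (c ^ β * d ^ (1 - β)) := by
  have hqp : (0:ℝ) < q / p := div_pos hq hp
  have hac : a = (q / p) * c := by field_simp; linarith
  have hbd : b = (q / p) * d := by field_simp; linarith
  rw [hac, hbd, Real.mul_rpow hqp.le hc, Real.mul_rpow hqp.le hd]
  have key : (q / p) ^ β * (q / p) ^ (1 - β) = q / p := by
    rw [← Real.rpow_add hqp]; norm_num
  calc p * ((q / p) ^ β * c ^ β * ((q / p) ^ (1 - β) * d ^ (1 - β)))
      = p * ((q / p) ^ β * (q / p) ^ (1 - β)) * (c ^ β * d ^ (1 - β)) := by ring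
    _ = p * (q / p) * (c ^ β * d ^ (1 - β)) := by rw [key]
    _ = q * (c ^ β * d ^ (1 - β)) := by field_simp

lemma pmean_rev {π : X → ℝ} (hπ : ∀ x, 0 < π x) {L : X → X → ℝ}
    (hLpos : ∀ x y, x ≠ y → 0 < L x y) (p : ℝ) (hp : p ≠ 0) {x y : X} (h : x ≠ y) :
    π x * pmean p π L x y = π y * pmean p π L y x := by
  have hdxy := dual_pos hπ hLpos h
  have hdyx := dual_pos hπ hLpos h.symm
  have key : ∀ u v : X, u ≠ v →
      π u * pmean p π L u v =
        (((π u * L u v) ^ p + (π v * L v u) ^ p) / 2) ^ (1 / p) := by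
    intro u v huv
    have hduv := dual_pos hπ hLpos huv
    rw [pmean_apply p π L huv (hLpos u v huv) hduv]
    have hπu := hπ u
    have hbase : (0:ℝ) ≤ (L u v ^ p + dual π L u v ^ p) / 2 := by
      have := Real.rpow_pos_of_pos (hLpos u v huv) p
      have := Real.rpow_pos_of_pos hduv p
      positivity
    have hπp : π u = (π u ^ p) ^ (1 / p) := by
      rw [← Real.rpow_mul hπu.le, mul_one_div, div_self hp, Real.rpow_one]
    calc π u * ((L u v ^ p + dual π L u v ^ p) / 2) ^ (1 / p)
        = (π u ^ p) ^ (1/p) * ((L u v ^ p + dual π L u v ^ p) / 2) ^ (1 / p) := by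
          rw [← hπp]
      _ = (π u ^ p * ((L u v ^ p + dual π L u v ^ p) / 2)) ^ (1 / p) := by
          rw [← Real.mul_rpow (Real.rpow_pos_of_pos hπu p).le hbase]
      _ = (((π u * L u v) ^ p + (π u * dual π L u v) ^ p) / 2) ^ (1 / p) := by
          rw [Real.mul_rpow hπu.le (hLpos u v huv).le,
              Real.mul_rpow hπu.le hduv.le]; ring_nf
      _ = (((π u * L u v) ^ p + (π v * L v u) ^ p) / 2) ^ (1 / p) := by
          rw [dual_apply π L huv]
          congr 3
          field_simp
  rw [key x y h, key y x h.symm]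
  ring_nf

/-- swapping summation indices -/
lemma swap_sum (π : X → ℝ) (g h : X → X → ℝ)
    (H : ∀ x y, x ≠ y → π x * g x y = π y * h y x) :
    ∑ x, π x * ∑ y ∈ Finset.univ.erase x, g x y
      = ∑ x, π x * ∑ y ∈ Finset.univ.erase x, h x y := by
  have key : ∀ F : X → X → ℝ, (∑ x, π x * ∑ y ∈ Finset.univ.erase x, F x y)
      = ∑ x, ∑ y, if x = y then 0 else π x * F x y := by
    intro F
    refine Finset.sum_congr rfl fun x _ => ?_
    rw [Finset.mul_sum]
    rw [← Finset.sum_erase_add _ _ (Finset.mem_univ x)]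
    rw [if_pos rfl, add_zero]
    refine Finset.sum_congr rfl fun y hy => ?_
    rw [if_neg (Finset.ne_of_mem_erase hy).symm]
  rw [key g, key h, Finset.sum_comm]
  refine Finset.sum_congr rfl fun a _ => Finset.sum_congr rfl fun b _ => ?_
  by_cases hab : b = a
  · subst hab; simp
  · rw [if_neg hab, if_neg (Ne.symm hab)]
    exact H b a hab


lemma falpha_term {α m n : ℝ} (hα0 : α ≠ 0) (hα1 : α ≠ 1) (hm : 0 < m) (hn : 0 < n) :
    n * falpha α (m / n) =
      (m ^ α * n ^ (1 - α) - α * m - (1 - α) * n) / (α * (α - 1)) := by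
  unfold falpha
  have hdiv : (m / n) ^ α = m ^ α / n ^ α := Real.div_rpow hm.le hn.le α
  have hn1 : n ^ (1 - α) = n / n ^ α := by
    rw [Real.rpow_sub hn, Real.rpow_one]
  have hnα : (0:ℝ) < n ^ α := Real.rpow_pos_of_pos hn α
  have hα1' : α - 1 ≠ 0 := sub_ne_zero.mpr hα1
  rw [hdiv, hn1]
  field_simp

lemma sum_comb (π : X → ℝ) (g h k : X → X → ℝ) (a b c : ℝ) :
    ∑ x, π x * ∑ y ∈ Finset.univ.erase x, (g x y - a * h x y - b * k x y) / c
      = ((∑ x, π x * ∑ y ∈ Finset.univ.erase x, g x y)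
          - a * (∑ x, π x * ∑ y ∈ Finset.univ.erase x, h x y)
          - b * (∑ x, π x * ∑ y ∈ Finset.univ.erase x, k x y)) / c := by
  simp only [Finset.sum_div, Finset.sum_sub_distrib, ← Finset.mul_sum,
    ← mul_div_assoc, ← Finset.sum_div, mul_sub]
  congr 1
  simp [Finset.sum_sub_distrib, Finset.mul_sum, mul_left_comm]

lemma Df_formula (α : ℝ) (hα0 : α ≠ 0) (hα1 : α ≠ 1) (π : X → ℝ)
    (M N : X → X → ℝ) (hM : ∀ x y, x ≠ y → 0 < M x y)
    (hN : ∀ x y, x ≠ y → 0 < N x y) :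
    Df (falpha α) π M N =
      (Gsum α π M N - α * Ssum π M - (1 - α) * Ssum π N) / (α * (α - 1)) := by
  have step : Df (falpha α) π M N
      = ∑ x, π x * ∑ y ∈ Finset.univ.erase x,
          (M x y ^ α * N x y ^ (1 - α) - α * M x y - (1 - α) * N x y)
            / (α * (α - 1)) := by
    refine Finset.sum_congr rfl fun x _ => ?_
    congr 1
    refine Finset.sum_congr rfl fun y hy => ?_
    have hxy : x ≠ y := (Finset.ne_of_mem_erase hy).symm
    exact falpha_term hα0 hα1 (hM x y hxy) (hN x y hxy)
  rw [step, sum_comb]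
  rfl

lemma sum_avg (π : X → ℝ) (g h : X → X → ℝ) :
    ∑ x, π x * ∑ y ∈ Finset.univ.erase x, (g x y + h x y) / 2
      = ((∑ x, π x * ∑ y ∈ Finset.univ.erase x, g x y)
          + (∑ x, π x * ∑ y ∈ Finset.univ.erase x, h x y)) / 2 := by
  simp only [Finset.sum_div, Finset.sum_add_distrib, ← Finset.mul_sum,
    ← mul_div_assoc, ← Finset.sum_div, mul_add]


open Finset in
theorem main_thm (π : X → ℝ) (hπ : ∀ x, 0 < π x)
    (α : ℝ) (hα0 : α ≠ 0) (hα1 : α ≠ 1)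
    (L : X → X → ℝ) (hLpos : ∀ x y, x ≠ y → 0 < L x y)
    (Mbar : X → X → ℝ) (hrev : ∀ x y, π x * Mbar x y = π y * Mbar y x)
    (hMbarpos : ∀ x y, x ≠ y → 0 < Mbar x y) :
    Df (falpha α) π L Mbar =
      Df (falpha α) π L (pmean α π L) + Df (falpha α) π (pmean α π L) Mbar ∧
    Df (falpha α) π Mbar L =
      Df (falpha α) π Mbar (pmean (1 - α) π L) +
        Df (falpha α) π (pmean (1 - α) π L) L := by
  have hα1' : (1:ℝ) - α ≠ 0 := sub_ne_zero.mpr (Ne.symm hα1)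
  have hd : ∀ x y : X, x ≠ y → 0 < dual π L x y := fun x y h => dual_pos hπ hLpos h
  have hPpos : ∀ x y : X, x ≠ y → 0 < pmean α π L x y :=
    fun x y h => pmean_pos α π L h (hLpos x y h) (hd x y h)
  have hQpos : ∀ x y : X, x ≠ y → 0 < pmean (1 - α) π L x y :=
    fun x y h => pmean_pos (1 - α) π L h (hLpos x y h) (hd x y h)
  have hdualL : ∀ x y : X, x ≠ y → π x * dual π L x y = π y * L y x := by
    intro x y hxy
    rw [dual_apply π L hxy, mul_div_assoc']
    exact mul_div_cancel_left₀ _ (hπ x).ne'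
  have hLdual : ∀ x y : X, x ≠ y → π x * L x y = π y * dual π L y x := by
    intro x y hxy
    rw [dual_apply π L hxy.symm, mul_div_assoc']
    exact (mul_div_cancel_left₀ _ (hπ y).ne').symm
  constructor
  · -- first identity, with P = pmean α π L
    set P := pmean α π L with hPdef
    have hGdM : Gsum α π (dual π L) Mbar = Gsum α π L Mbar := by
      refine swap_sum π _ _ (fun x y hxy => ?_)
      exact pt (hπ x) (hπ y) (hMbarpos x y hxy).le (hLpos y x hxy.symm).le
        (hMbarpos y x hxy.symm).le (hdualL x y hxy) (hrev x y)
    have hGPM : Gsum α π P Mbar = Gsum α π L Mbar := by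
      have havg : Gsum α π P Mbar
          = (Gsum α π L Mbar + Gsum α π (dual π L) Mbar) / 2 := by
        unfold Gsum
        rw [← sum_avg]
        refine Finset.sum_congr rfl fun x _ => ?_
        congr 1
        refine Finset.sum_congr rfl fun y hy => ?_
        have hxy : x ≠ y := (Finset.ne_of_mem_erase hy).symm
        rw [hPdef, pmean_rpow α hα0 π L hxy (hLpos x y hxy) (hd x y hxy)]
        ring
      rw [havg, hGdM]
      ring
    have hGLP : Gsum α π L P = Ssum π P := by
      have hswap : Gsum α π L P = Gsum α π (dual π L) P := by
        refine swap_sum π _ _ (fun x y hxy => ?_)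
        exact pt (hπ x) (hπ y) (hPpos x y hxy).le (hd y x hxy.symm).le
          (hPpos y x hxy.symm).le (hLdual x y hxy)
          (pmean_rev hπ hLpos α hα0 hxy)
      have hSP : Ssum π P = (Gsum α π L P + Gsum α π (dual π L) P) / 2 := by
        unfold Ssum Gsum
        rw [← sum_avg]
        refine Finset.sum_congr rfl fun x _ => ?_
        congr 1
        refine Finset.sum_congr rfl fun y hy => ?_
        have hxy : x ≠ y := (Finset.ne_of_mem_erase hy).symm
        have hP := hPpos x y hxy
        have h1 : P x y = P x y ^ α * P x y ^ (1 - α) := by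
          rw [← Real.rpow_add hP]
          norm_num
        have h2 : P x y ^ α = (L x y ^ α + dual π L x y ^ α) / 2 := by
          rw [hPdef]
          exact pmean_rpow α hα0 π L hxy (hLpos x y hxy) (hd x y hxy)
        conv_lhs => rw [h1]
        rw [h2]
        ring
      rw [hSP, ← hswap]
      linarith
    rw [Df_formula α hα0 hα1 π L Mbar hLpos hMbarpos,
        Df_formula α hα0 hα1 π L P hLpos hPpos,
        Df_formula α hα0 hα1 π P Mbar hPpos hMbarpos,
        ← add_div]
    congr 1
    rw [hGPM, hGLP]
    ring
  · -- second identity, with Q = pmean (1-α) π L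
    set Q := pmean (1 - α) π L with hQdef
    have hGMd : Gsum α π Mbar (dual π L) = Gsum α π Mbar L := by
      refine swap_sum π _ _ (fun x y hxy => ?_)
      exact pt (hπ x) (hπ y) (hd x y hxy).le (hMbarpos y x hxy.symm).le
        (hLpos y x hxy.symm).le (hrev x y) (hdualL x y hxy)
    have hGMQ : Gsum α π Mbar Q = Gsum α π Mbar L := by
      have havg : Gsum α π Mbar Q
          = (Gsum α π Mbar L + Gsum α π Mbar (dual π L)) / 2 := by
        unfold Gsum
        rw [← sum_avg]
        refine Finset.sum_congr rfl fun x _ => ?_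
        congr 1
        refine Finset.sum_congr rfl fun y hy => ?_
        have hxy : x ≠ y := (Finset.ne_of_mem_erase hy).symm
        rw [hQdef, pmean_rpow (1 - α) hα1' π L hxy (hLpos x y hxy) (hd x y hxy)]
        ring
      rw [havg, hGMd]
      ring
    have hGQL : Gsum α π Q L = Ssum π Q := by
      have hswap : Gsum α π Q L = Gsum α π Q (dual π L) := by
        refine swap_sum π _ _ (fun x y hxy => ?_)
        exact pt (hπ x) (hπ y) (hLpos x y hxy).le (hQpos y x hxy.symm).le
          (hd y x hxy.symm).le (pmean_rev hπ hLpos (1 - α) hα1' hxy)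
          (hLdual x y hxy)
      have hSQ : Ssum π Q = (Gsum α π Q L + Gsum α π Q (dual π L)) / 2 := by
        unfold Ssum Gsum
        rw [← sum_avg]
        refine Finset.sum_congr rfl fun x _ => ?_
        congr 1
        refine Finset.sum_congr rfl fun y hy => ?_
        have hxy : x ≠ y := (Finset.ne_of_mem_erase hy).symm
        have hQ := hQpos x y hxy
        have h1 : Q x y = Q x y ^ α * Q x y ^ (1 - α) := by
          rw [← Real.rpow_add hQ]
          norm_num
        have h2 : Q x y ^ (1 - α) = (L x y ^ (1 - α) + dual π L x y ^ (1 - α)) / 2 := by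
          rw [hQdef]
          exact pmean_rpow (1 - α) hα1' π L hxy (hLpos x y hxy) (hd x y hxy)
        conv_lhs => rw [h1]
        rw [h2]
        ring
      rw [hSQ, ← hswap]
      linarith
    rw [Df_formula α hα0 hα1 π Mbar L hMbarpos hLpos,
        Df_formula α hα0 hα1 π Mbar Q hMbarpos hQpos,
        Df_formula α hα0 hα1 π Q L hQpos hLpos,
        ← add_div]
    congr 1
    rw [hGMQ, hGQL]
    ring

/-- **Pythagorean identities for the `α`-divergence** (Theorem 3.3(3)):
for `L ∈ ℒ⁺` and every `M̄ ∈ ℒ⁺(π)`,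
`D_α(L‖M̄) = D_α(L‖P_α(L)) + D_α(P_α(L)‖M̄)` and
`D_α(M̄‖L) = D_α(M̄‖P_{α*}(L)) + D_α(P_{α*}(L)‖L)` with `α* = 1 − α`. -/
theorem alpha_pythagorean (π : X → ℝ) (hπ : IsProb π)
    (α : ℝ) (hα0 : α ≠ 0) (hα1 : α ≠ 1)
    (L : X → X → ℝ) (hL : IsGen L) (hLpos : ∀ x y, x ≠ y → 0 < L x y)
    (Mbar : X → X → ℝ) (hMbar : IsRev π Mbar)
    (hMbarpos : ∀ x y, x ≠ y → 0 < Mbar x y) :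
    Df (falpha α) π L Mbar =
      Df (falpha α) π L (pmean α π L) + Df (falpha α) π (pmean α π L) Mbar ∧
    Df (falpha α) π Mbar L =
      Df (falpha α) π Mbar (pmean (1 - α) π L) +
        Df (falpha α) π (pmean (1 - α) π L) L :=
  main_thm π hπ.1 α hα0 hα1 L hLpos Mbar hMbar.2 hMbarpos

end
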